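/- arXiv:1808.02853 — 4 statements merged into one kernel-verified Lean document; each statement's English description precedes it below -/
import Mathlib

section
/- In the spin factor 𝕊_{1,n}, the k-th power of x = (x₀, x) is x^k = (z₀, z) where z₀ = Σ_{i+j=k, j even} C(k,i) x₀^i (x·x)^{j/2} and z = Σ_{i+j=k, j odd} C(k,i) x₀^i (x·x)^{(j-1)/2} x. -/
/-!
In the subalgebra of `𝕊_{1,n}` generated by `x = (x₀, v)` the vector part squares to a scalar:
`(0, v) • (0, v) = (v·v, 0)`. Hence `u + wω ↦ (u, w v)` is a multiplicative map from the quadratic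
algebra `ℝ[ω]/(ω² - v·v)` onto it, sending `x₀ + ω` to `x`. So `x^k` is the image of `(x₀ + ω)^k`,
which the binomial theorem expands using `ω^(2m) = (v·v)^m` and `ω^(2m+1) = (v·v)^m ω`.
-/

/-- The Jordan product on the spin factor 𝕊_{1,n} = ℝ × ℝⁿ. -/
def sprod {n : ℕ} (x y : ℝ × (Fin n → ℝ)) : ℝ × (Fin n → ℝ) :=
  (x.1 * y.1 + ∑ i, x.2 i * y.2 i, fun i => x.1 * y.2 i + y.1 * x.2 i)

/-- Powers in the spin factor: `x^1 = x` and `x^(k+1) = x • x^k`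
(the zeroth power is the unit `(1,0)`, so that `spow x 1 = x`). -/
def spow {n : ℕ} (x : ℝ × (Fin n → ℝ)) : ℕ → ℝ × (Fin n → ℝ)
  | 0 => (1, 0)
  | k + 1 => sprod x (spow x k)

namespace QuadraticAlgebra

variable {R : Type*} [CommSemiring R] {a : R}

theorem omega_sq : (ω : QuadraticAlgebra R a 0) ^ 2 = algebraMap R _ a := by
  simp [sq, omega_mul_omega_eq_algebraMap]

theorem omega_pow_two_mul (m : ℕ) : (ω : QuadraticAlgebra R a 0) ^ (2 * m) = ⟨a ^ m, 0⟩ := by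
  rw [pow_mul, omega_sq, ← map_pow]
  rfl

theorem omega_pow_two_mul_add_one (m : ℕ) :
    (ω : QuadraticAlgebra R a 0) ^ (2 * m + 1) = ⟨0, a ^ m⟩ := by
  rw [pow_succ, omega_pow_two_mul]
  ext <;> simp

theorem omega_pow_re (j : ℕ) :
    ((ω : QuadraticAlgebra R a 0) ^ j).re = if Even j then a ^ (j / 2) else 0 := by
  obtain ⟨m, rfl | rfl⟩ := Nat.even_or_odd' j
  · simp [omega_pow_two_mul]
  · simp [omega_pow_two_mul_add_one]

theorem omega_pow_im (j : ℕ) :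
    ((ω : QuadraticAlgebra R a 0) ^ j).im = if Odd j then a ^ ((j - 1) / 2) else 0 := by
  obtain ⟨m, rfl | rfl⟩ := Nat.even_or_odd' j
  · simp [omega_pow_two_mul]
  · simp [omega_pow_two_mul_add_one]

theorem mk_one_pow (c : R) (k : ℕ) :
    (⟨c, 1⟩ : QuadraticAlgebra R a 0) ^ k =
      ∑ i ∈ Finset.range (k + 1), ((k.choose i : R) * c ^ i) • ω ^ (k - i) := by
  rw [mk_eq_add_smul_omega, one_smul, add_pow]
  refine Finset.sum_congr rfl fun i _ => ?_
  rw [← map_pow, mul_comm, ← mul_assoc, ← map_natCast (algebraMap R _), ← map_mul, ← Algebra.smul_def]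

theorem mk_one_pow_re (c : R) (k : ℕ) :
    ((⟨c, 1⟩ : QuadraticAlgebra R a 0) ^ k).re =
      ∑ i ∈ Finset.range (k + 1),
        if Even (k - i) then (k.choose i : R) * c ^ i * a ^ ((k - i) / 2) else 0 := by
  rw [mk_one_pow, ← reₗ_apply, map_sum]
  simp only [map_smul, reₗ_apply, omega_pow_re, smul_eq_mul, mul_ite, mul_zero]

theorem mk_one_pow_im (c : R) (k : ℕ) :
    ((⟨c, 1⟩ : QuadraticAlgebra R a 0) ^ k).im =
      ∑ i ∈ Finset.range (k + 1),
        if Odd (k - i) then (k.choose i : R) * c ^ i * a ^ ((k - i - 1) / 2) else 0 := by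
  rw [mk_one_pow, ← imₗ_apply, map_sum]
  simp only [map_smul, imₗ_apply, omega_pow_im, smul_eq_mul, mul_ite, mul_zero]

end QuadraticAlgebra

open QuadraticAlgebra

def toSpin {n : ℕ} (v : Fin n → ℝ) (z : QuadraticAlgebra ℝ (∑ p, v p * v p) 0) :
    ℝ × (Fin n → ℝ) :=
  (z.re, z.im • v)

theorem toSpin_mk_one {n : ℕ} (v : Fin n → ℝ) (c : ℝ) : toSpin v ⟨c, 1⟩ = (c, v) := by
  simp [toSpin]

theorem sprod_toSpin {n : ℕ} (v : Fin n → ℝ) (z w : QuadraticAlgebra ℝ (∑ p, v p * v p) 0) :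
    sprod (toSpin v z) (toSpin v w) = toSpin v (z * w) := by
  ext p
  · simp only [sprod, toSpin, re_mul, Pi.smul_apply, smul_eq_mul, Finset.sum_mul]
    congr 1
    exact Finset.sum_congr rfl fun p _ => by ring
  · simp only [sprod, toSpin, Pi.smul_apply, smul_eq_mul, re_mul, im_mul, zero_mul, add_zero]
    ring

theorem spow_eq_toSpin_pow {n : ℕ} (x : ℝ × (Fin n → ℝ)) (k : ℕ) :
    spow x k = toSpin x.2 (⟨x.1, 1⟩ ^ k) := by
  induction k with
  | zero => ext <;> simp [spow, toSpin]
  | succ k ih => rw [spow, ih, pow_succ', ← sprod_toSpin, toSpin_mk_one]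

theorem spin_factor_power_formula_general (n k : ℕ) (x : ℝ × (Fin n → ℝ)) :
    spow x k =
      (∑ i ∈ Finset.range (k + 1),
          if Even (k - i) then
            (k.choose i : ℝ) * x.1 ^ i * (∑ p, x.2 p * x.2 p) ^ ((k - i) / 2)
          else 0,
       fun p =>
         (∑ i ∈ Finset.range (k + 1),
            if Odd (k - i) then
              (k.choose i : ℝ) * x.1 ^ i * (∑ q, x.2 q * x.2 q) ^ ((k - i - 1) / 2)
            else 0) * x.2 p) := by
  rw [spow_eq_toSpin_pow, toSpin, mk_one_pow_re, mk_one_pow_im]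
  rfl

/-- Explicit formula for powers in the spin factor: `x^k = (z₀, z)` with
`z₀ = Σ_{i+j=k, j even} C(k,i) x₀^i (x·x)^{j/2}` and
`z = (Σ_{i+j=k, j odd} C(k,i) x₀^i (x·x)^{(j-1)/2}) · x`. -/
theorem spin_factor_power_formula (n k : ℕ) (hk : 1 ≤ k) (x : ℝ × (Fin n → ℝ)) :
    spow x k =
      (∑ i ∈ Finset.range (k + 1),
          if Even (k - i) then
            (k.choose i : ℝ) * x.1 ^ i * (∑ p, x.2 p * x.2 p) ^ ((k - i) / 2)
          else 0,
       fun p =>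
         (∑ i ∈ Finset.range (k + 1),
            if Odd (k - i) then
              (k.choose i : ℝ) * x.1 ^ i * (∑ q, x.2 q * x.2 q) ^ ((k - i - 1) / 2)
            else 0) * x.2 p) :=
  spin_factor_power_formula_general n k x
end

section
/- The logarithm of the series B(x) = Σ_{m≥0} C_𝕊(n,2m)/(2^m m!) · x^{2m} is B_c(x) = Σ_{m≥1} (1/(2m))((2^m − 1)n + 1) x^{2m}; in particular the coefficient of x^{2m} in log B(x) is ((2^m−1)n+1)/(2m). -/
/-!
In the variable `y = x²` the claim says `B = exp B_c`, where
`B_c' = (n + 1 - 2y) / (2(1 - y)(1 - 2y))`. Since the solution of `F' = B_c' F` with `F(0) = 1`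
is unique, it suffices that `2(1 - y)(1 - 2y) B' = (n + 1 - 2y) B`, which coefficientwise is
the three-term recurrence `C(k+2) = (n+6k+7) C(k+1) - (8k²+12k+4) C(k)` for `C = C_𝕊(n, 2·)`.
That recurrence comes from writing `C(m) / (2m)!` as the coefficient of
`e^{y/2} · Σ_j ∏_{l<j} (n+2l) y^j / (2j)!`: the second factor satisfies an evident
second-order equation, hence so does the product.
-/

/-- `C_𝕊(n,2m) = Σ_{i+j=2m, i,j even} C(2m,i)·(i−1)!!·∏_{l=0}^{j/2−1}(n+2l)`
(writing `i = 2i'`), the polynomial `⟨Tr x^{2m}⟩` for the spin factor. -/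
def CSq (n : ℚ) (m : ℕ) : ℚ :=
  ∑ i ∈ Finset.range (m + 1),
    ((2 * m).choose (2 * i) : ℚ) * (Nat.doubleFactorial (2 * i - 1) : ℚ) *
      ∏ l ∈ Finset.range (m - i), (n + 2 * l)

open PowerSeries Nat

namespace PowerSeries

theorem eq_of_derivative_eq_mul {K : Type*} [Field K] [CharZero K] {f g h : K⟦X⟧}
    (hf : d⁄dX K f = h * f) (hg : d⁄dX K g = h * g) (hg₀ : constantCoeff g ≠ 0)
    (hc : constantCoeff f = constantCoeff g) : f = g := by
  have hgg : g * g⁻¹ = 1 := PowerSeries.mul_inv_cancel g hg₀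
  have hquot : f * g⁻¹ = 1 := by
    refine derivative.ext ?_ (by simp [hc, hg₀])
    rw [Derivation.leibniz, derivative_inv', hf, hg, smul_eq_mul, smul_eq_mul, derivative_one]
    linear_combination (-(f * h * g⁻¹)) * hgg
  calc f = f * g⁻¹ * g := by rw [mul_assoc, mul_comm g⁻¹, hgg, mul_one]
    _ = g := by rw [hquot, one_mul]

theorem coeff_pow_eq_zero_of_lt {R : Type*} [CommRing R] {g : R⟦X⟧} (hg : constantCoeff g = 0)
    {p d : ℕ} (h : p < d) : coeff p (g ^ d) = 0 :=
  X_pow_dvd_iff.mp (pow_dvd_pow_of_dvd (X_dvd_iff.mpr hg) d) p h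

theorem coeff_subst_eq_sum_range {R : Type*} [CommRing R] {f g : R⟦X⟧}
    (hg : constantCoeff g = 0) (p : ℕ) :
    coeff p (f.subst g) = ∑ d ∈ Finset.range (p + 1), coeff d f • coeff p (g ^ d) := by
  rw [coeff_subst' (HasSubst.of_constantCoeff_zero' hg)]
  refine finsum_eq_sum_of_support_subset _ fun d hd => ?_
  contrapose! hd
  simp [coeff_pow_eq_zero_of_lt hg (by simpa using hd)]

theorem derivative_exp_subst {A : Type*} [CommRing A] [Algebra ℚ A] {g : A⟦X⟧}
    (hg : HasSubst g) :
    d⁄dX A ((exp A).subst g) = d⁄dX A g * (exp A).subst g := by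
  rw [derivative_subst hg, derivative_exp, mul_comm]

theorem derivative_expand {R : Type*} [CommRing R] (p : ℕ) (hp : p ≠ 0) (f : R⟦X⟧) :
    d⁄dX R (expand p hp f) = expand p hp (d⁄dX R f) * ((p : R⟦X⟧) * X ^ (p - 1)) := by
  rw [expand_apply, expand_apply, derivative_subst (HasSubst.X_pow hp), derivative_pow,
    derivative_X, mul_one]

theorem derivative_expand_eq_mul {R : Type*} [CommRing R] (p : ℕ) (hp : p ≠ 0) {f g : R⟦X⟧}
    (h : d⁄dX R f = d⁄dX R g * f) :
    d⁄dX R (expand p hp f) = d⁄dX R (expand p hp g) * expand p hp f := by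
  rw [derivative_expand, derivative_expand, h, map_mul]
  ring

end PowerSeries

theorem Nat.factorial_two_mul (i : ℕ) : (2 * i)! = 2 ^ i * i ! * (2 * i - 1)‼ := by
  cases i with
  | zero => rfl
  | succ i =>
    rw [show 2 * (i + 1) = 2 * i + 1 + 1 by ring, factorial_eq_mul_doubleFactorial,
      show 2 * i + 1 + 1 = 2 * (i + 1) by ring, doubleFactorial_two_mul,
      show 2 * (i + 1) - 1 = 2 * i + 1 by omega]

namespace SpinFactor

noncomputable def halfExp : ℚ⟦X⟧ := mk fun i => 1 / (2 ^ i * i !)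

noncomputable def pochhammerSeries (n : ℚ) : ℚ⟦X⟧ :=
  mk fun j => (∏ l ∈ Finset.range j, (n + 2 * l)) / (2 * j)!

theorem coeff_halfExp_mul_pochhammerSeries (n : ℚ) (m : ℕ) :
    coeff m (halfExp * pochhammerSeries n) = CSq n m / (2 * m)! := by
  rw [coeff_mul, Finset.Nat.sum_antidiagonal_eq_sum_range_succ_mk, CSq, Finset.sum_div]
  refine Finset.sum_congr rfl fun i hi_mem => ?_
  have hi : 2 * i ≤ 2 * m := by simp at hi_mem; omega
  have hchoose : ((2 * m).choose (2 * i) : ℚ) ≠ 0 := Nat.cast_ne_zero.mpr (Nat.choose_pos hi).ne'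
  have hfact := Nat.choose_mul_factorial_mul_factorial hi
  rw [factorial_two_mul, show 2 * m - 2 * i = 2 * (m - i) by omega] at hfact
  simp only [halfExp, pochhammerSeries, coeff_mk]
  rw [← hfact]
  push_cast
  field_simp

theorem two_mul_derivative_halfExp : 2 * d⁄dX ℚ halfExp = halfExp := by
  ext m
  simp only [halfExp, coeff_derivative, coeff_mk, ← map_ofNat (C (R := ℚ)), coeff_C_mul]
  push_cast [pow_succ, factorial_succ]
  field_simp

theorem pochhammerSeries_ode (n : ℚ) :
    X * (4 * d⁄dX ℚ (d⁄dX ℚ (pochhammerSeries n)) - 2 * d⁄dX ℚ (pochhammerSeries n))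
      + 2 * d⁄dX ℚ (pochhammerSeries n) = C n * pochhammerSeries n := by
  ext m
  rcases m with _ | m
  · simp only [pochhammerSeries, coeff_derivative, coeff_mk, ← map_ofNat (C (R := ℚ)),
      LinearMap.map_add, coeff_C_mul, coeff_zero_X_mul]
    norm_num
    ring
  · simp only [pochhammerSeries, coeff_derivative, coeff_mk, ← map_ofNat (C (R := ℚ)),
      LinearMap.map_add, LinearMap.map_sub, coeff_C_mul, coeff_succ_X_mul, Finset.prod_range_succ]
    rw [show 2 * (m + 1 + 1) = 2 * (m + 1) + 1 + 1 by ring]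
    push_cast [factorial_succ]
    field_simp
    ring

theorem halfExp_mul_pochhammerSeries_ode (n : ℚ) :
    X * (4 * d⁄dX ℚ (d⁄dX ℚ (halfExp * pochhammerSeries n))
        - 6 * d⁄dX ℚ (halfExp * pochhammerSeries n) + 2 * (halfExp * pochhammerSeries n))
      + 2 * d⁄dX ℚ (halfExp * pochhammerSeries n)
      = C (n + 1) * (halfExp * pochhammerSeries n) := by
  set U := halfExp
  set V := pochhammerSeries n
  have hU : 2 * d⁄dX ℚ U = U := two_mul_derivative_halfExp
  have hU' : 2 * d⁄dX ℚ (d⁄dX ℚ U) = d⁄dX ℚ U := by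
    simpa only [two_mul, map_add] using congrArg (d⁄dX ℚ) hU
  have hV := pochhammerSeries_ode n
  simp only [Derivation.leibniz, smul_eq_mul, map_add, map_one]
  linear_combination U * hV + (X * (4 * d⁄dX ℚ V - 2 * V) + V) * hU + 2 * X * V * hU'

theorem CSq_zero (n : ℚ) : CSq n 0 = 1 := by simp [CSq]

theorem CSq_one (n : ℚ) : CSq n 1 = n + 1 := by simp [CSq, Finset.sum_range_succ]

theorem CSq_add_two (n : ℚ) (k : ℕ) :
    CSq n (k + 2) = (n + 6 * k + 7) * CSq n (k + 1) - (8 * k ^ 2 + 12 * k + 4) * CSq n k := by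
  have h := congrArg (coeff (k + 1)) (halfExp_mul_pochhammerSeries_ode n)
  simp only [coeff_derivative, ← map_ofNat (C (R := ℚ)), LinearMap.map_add, LinearMap.map_sub,
    coeff_C_mul, coeff_succ_X_mul, coeff_halfExp_mul_pochhammerSeries] at h
  rw [show 2 * (k + 1 + 1) = 2 * k + 1 + 1 + 1 + 1 by ring,
    show 2 * (k + 1) = 2 * k + 1 + 1 by ring] at h
  push_cast [factorial_succ] at h
  field_simp at h
  refine mul_left_cancel₀ (a := 2 * ((k : ℚ) + 2) * (2 * k + 3)) (by positivity) ?_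
  linear_combination h

noncomputable def momentSeries (n : ℚ) : ℚ⟦X⟧ := mk fun m => CSq n m / (2 ^ m * m !)

-- At `m = 0` the formula reads `1 / 0`, which Lean evaluates to the intended constant term `0`.
noncomputable def cumulantSeries (n : ℚ) : ℚ⟦X⟧ :=
  mk fun m => ((2 ^ m - 1) * n + 1) / (2 * m)

theorem momentSeries_ode (n : ℚ) :
    X * (X * (4 * d⁄dX ℚ (momentSeries n)) - 6 * d⁄dX ℚ (momentSeries n))
      + 2 * d⁄dX ℚ (momentSeries n)
      = C (n + 1) * momentSeries n - 2 * (X * momentSeries n) := by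
  ext m
  rcases m with _ | _ | m
  · simp only [momentSeries, coeff_derivative, coeff_mk, ← map_ofNat (C (R := ℚ)),
      LinearMap.map_add, LinearMap.map_sub, coeff_C_mul, coeff_zero_X_mul, zero_add, CSq_zero,
      CSq_one]
    ring
  · simp only [momentSeries, coeff_derivative, coeff_mk, ← map_ofNat (C (R := ℚ)),
      LinearMap.map_add, LinearMap.map_sub, coeff_C_mul, coeff_succ_X_mul, coeff_zero_X_mul,
      zero_add, CSq_add_two n 0, CSq_zero, CSq_one]
    norm_num
    ring
  · simp only [momentSeries, coeff_derivative, coeff_mk, ← map_ofNat (C (R := ℚ)),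
      LinearMap.map_add, LinearMap.map_sub, coeff_C_mul, coeff_succ_X_mul, CSq_add_two n (m + 1)]
    push_cast [pow_succ, factorial_succ]
    field_simp
    ring

theorem cumulantSeries_ode (n : ℚ) :
    X * (X * (4 * d⁄dX ℚ (cumulantSeries n)) - 6 * d⁄dX ℚ (cumulantSeries n))
      + 2 * d⁄dX ℚ (cumulantSeries n) = C (n + 1) - 2 * X := by
  ext m
  rcases m with _ | _ | m
  · simp only [cumulantSeries, coeff_derivative, coeff_mk, ← map_ofNat (C (R := ℚ)),
      LinearMap.map_add, LinearMap.map_sub, coeff_C_mul, coeff_zero_X_mul, coeff_C, coeff_zero_X]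
    norm_num
    ring
  · simp only [cumulantSeries, coeff_derivative, coeff_mk, ← map_ofNat (C (R := ℚ)),
      LinearMap.map_add, LinearMap.map_sub, coeff_C_mul, coeff_succ_X_mul, coeff_zero_X_mul,
      coeff_C, coeff_X]
    norm_num
    ring
  · simp only [cumulantSeries, coeff_derivative, coeff_mk, ← map_ofNat (C (R := ℚ)),
      LinearMap.map_add, LinearMap.map_sub, coeff_C_mul, coeff_succ_X_mul, coeff_C, coeff_X]
    push_cast [pow_succ]
    field_simp
    ring

-- Both ODEs carry the factor `2 (1 - X) (1 - 2X)`, which is not a zero divisor.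
theorem derivative_momentSeries (n : ℚ) :
    d⁄dX ℚ (momentSeries n) = d⁄dX ℚ (cumulantSeries n) * momentSeries n := by
  have hq : X * (X * 4 - 6) + 2 ≠ (0 : ℚ⟦X⟧) := fun h => by
    simpa [← map_ofNat (C (R := ℚ))] using congrArg constantCoeff h
  refine mul_left_cancel₀ hq ?_
  linear_combination momentSeries_ode n - momentSeries n * cumulantSeries_ode n

end SpinFactor

/-- The logarithm of `B(x) = Σ_{m≥0} C_𝕊(n,2m)/(2^m m!) x^{2m}` is
`B_c(x) = Σ_{m≥1} ((2^m−1)n+1)/(2m) · x^{2m}`; equivalently `B = exp B_c`,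
expressed coefficientwise (`coeff_p (exp S) = Σ_j coeff_p (S^j)/j!` for a
series `S` with zero constant term). -/
theorem spin_factor_connected_genfn (n : ℚ)
    (B Bc : PowerSeries ℚ)
    (hB : ∀ k : ℕ, PowerSeries.coeff (R := ℚ) k B =
      if Even k then CSq n (k / 2) / ((2 : ℚ) ^ (k / 2) * ((k / 2).factorial : ℚ)) else 0)
    (hBc : ∀ k : ℕ, PowerSeries.coeff (R := ℚ) k Bc =
      if k ≠ 0 ∧ Even k then (((2 : ℚ) ^ (k / 2) - 1) * n + 1) / (k : ℚ) else 0) :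
    ∀ p : ℕ, PowerSeries.coeff (R := ℚ) p B =
      ∑ j ∈ Finset.range (p + 1), PowerSeries.coeff (R := ℚ) p (Bc ^ j) / (j.factorial : ℚ) := by
  have hB_expand : B = expand 2 two_ne_zero (SpinFactor.momentSeries n) := by
    ext k
    rw [hB, coeff_expand]
    split_ifs with h₁ h₂ h₂ <;> simp_all [SpinFactor.momentSeries, even_iff_two_dvd]
  have hBc_expand : Bc = expand 2 two_ne_zero (SpinFactor.cumulantSeries n) := by
    ext k
    rw [hBc, coeff_expand]
    by_cases hk : 2 ∣ k
    · obtain ⟨j, rfl⟩ := hk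
      rcases eq_or_ne j 0 with rfl | hj <;> simp [SpinFactor.cumulantSeries, *]
    · simp [hk, even_iff_two_dvd]
  have hc : constantCoeff Bc = 0 := by simpa using hBc 0
  have hexp₀ : constantCoeff ((exp ℚ).subst Bc) = 1 := by
    simpa using coeff_subst_eq_sum_range (f := exp ℚ) hc 0
  have hexp : B = (exp ℚ).subst Bc := by
    refine eq_of_derivative_eq_mul (h := d⁄dX ℚ Bc) ?_
      (derivative_exp_subst (HasSubst.of_constantCoeff_zero' hc)) (by simp [hexp₀]) ?_
    · rw [hB_expand, hBc_expand]
      exact derivative_expand_eq_mul 2 two_ne_zero (SpinFactor.derivative_momentSeries n)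
    · simpa [hexp₀, SpinFactor.CSq_zero] using hB 0
  intro p
  rw [hexp, coeff_subst_eq_sum_range hc]
  simp [coeff_exp, div_eq_inv_mul]
end

section
/- For every even k = 2m ≥ 2, the coefficient of n^{m−1} (the codegree-one coefficient) of the polynomial C_𝕊(n,k) = ⟨Tr x^k⟩_{𝕊_{1,n}} equals the m-th octagonal number m(3m−2) = 2·C(m,2) + C(2m,2). -/
open Polynomial

/-- The polynomial `C_𝕊(n,2m) = Σ_{i+j=2m, i,j even} C(2m,i)·(i−1)!!·∏_{l=0}^{j/2−1}(n+2l)`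
(writing `i = 2i'`), as a polynomial in `n`. -/
noncomputable def CSpoly (m : ℕ) : Polynomial ℚ :=
  ∑ i ∈ Finset.range (m + 1),
    C (((2 * m).choose (2 * i) : ℚ) * (Nat.doubleFactorial (2 * i - 1) : ℚ)) *
      ∏ l ∈ Finset.range (m - i), (X + C (2 * l : ℚ))

/-!
The `i`-th summand of `C_𝕊(n,2m)` has degree `m - i`, so only `i = 0` and `i = 1` reach
`n^{m-1}`. For `i = 0` the coefficient is the first elementary symmetric function of
`0, 2, …, 2(m-1)`, namely `m(m-1) = 2·C(m,2)`; for `i = 1` it is `C(2m,2)` times the leading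
coefficient `1` of a monic product. Finally `m(m-1) + m(2m-1) = m(3m-2)`.
-/

namespace Finset

variable {R σ : Type*} [CommSemiring R] (s : Finset σ) (r : σ → R)

theorem prod_X_add_C_coeff_of_card_eq {k : ℕ} (h : #s = k) :
    (∏ i ∈ s, (X + C (r i))).coeff k = 1 := by
  rw [prod_X_add_C_coeff s r h.ge, h, Nat.sub_self, powersetCard_zero, sum_singleton, prod_empty]

theorem prod_X_add_C_coeff_of_card_eq_succ {k : ℕ} (h : #s = k + 1) :
    (∏ i ∈ s, (X + C (r i))).coeff k = ∑ i ∈ s, r i := by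
  rw [prod_X_add_C_coeff s r (by omega), show #s - k = 1 by omega, powersetCard_one, sum_map]
  simp only [Function.Embedding.coeFn_mk, prod_singleton]

theorem natDegree_prod_X_add_C_le : (∏ i ∈ s, (X + C (r i))).natDegree ≤ #s := by
  refine (natDegree_prod_le s fun i => X + C (r i)).trans ?_
  rw [card_eq_sum_ones]
  exact sum_le_sum fun _ _ => natDegree_add_C.trans_le natDegree_X_le

theorem prod_X_add_C_coeff_of_card_lt {k : ℕ} (h : #s < k) :
    (∏ i ∈ s, (X + C (r i))).coeff k = 0 :=
  coeff_eq_zero_of_natDegree_lt <| (natDegree_prod_X_add_C_le s r).trans_lt h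

theorem sum_range_two_mul_natCast (j : ℕ) :
    ∑ l ∈ range j, (2 * l : R) = ((j * (j - 1) : ℕ) : R) := by
  rw [← mul_sum, ← sum_range_id_mul_two]
  push_cast
  ring

end Finset

theorem Nat.two_mul_choose_two (n : ℕ) : 2 * n.choose 2 = n * (n - 1) := by
  rw [Nat.choose_two_right]
  exact Nat.mul_div_cancel' (Nat.even_mul_pred_self n).two_dvd

theorem octagonal_eq_two_mul_choose_two_add_choose_two (m : ℕ) :
    m * (3 * m - 2) = 2 * m.choose 2 + (2 * m).choose 2 := by
  obtain _ | n := m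
  · rfl
  have h := Nat.two_mul_choose_two (2 * (n + 1))
  rw [show 2 * (n + 1) - 1 = 2 * n + 1 by omega] at h
  rw [Nat.two_mul_choose_two, show 3 * (n + 1) - 2 = 3 * n + 1 by omega, Nat.add_sub_cancel]
  linarith

theorem CSpoly_coeff_pred {m : ℕ} (hm : 1 ≤ m) :
    (CSpoly m).coeff (m - 1) = ((m * (m - 1) + (2 * m).choose 2 : ℕ) : ℚ) := by
  obtain ⟨n, rfl⟩ : ∃ n, m = n + 1 := ⟨m - 1, by omega⟩
  rw [CSpoly, finsetSum_coeff, Finset.sum_range_succ', Finset.sum_range_succ',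
    Finset.sum_eq_zero fun i hi => ?higher, coeff_C_mul, coeff_C_mul,
    Finset.prod_X_add_C_coeff_of_card_eq _ _ (by simp),
    Finset.prod_X_add_C_coeff_of_card_eq_succ _ _ (by simp), Finset.sum_range_two_mul_natCast]
  · push_cast
    simp only [Nat.doubleFactorial, mul_one, Nat.choose_zero_right]
    ring
  case higher =>
    have hi := Finset.mem_range.mp hi
    rw [coeff_C_mul, Finset.prod_X_add_C_coeff_of_card_lt _ _ (by rw [Finset.card_range]; omega),
      mul_zero]

/-- For `k = 2m ≥ 2`, the codegree-one coefficient of `C_𝕊(n,k)` is the `m`-th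
octagonal number `m(3m−2) = 2·C(m,2) + C(2m,2)`. -/
theorem spin_factor_codegree_one_octagonal (m : ℕ) (hm : 1 ≤ m) :
    (CSpoly m).coeff (m - 1) = ((m * (3 * m - 2) : ℕ) : ℚ) ∧
    m * (3 * m - 2) = 2 * m.choose 2 + (2 * m).choose 2 := by
  refine ⟨?_, octagonal_eq_two_mul_choose_two_add_choose_two m⟩
  rw [CSpoly_coeff_pred hm, octagonal_eq_two_mul_choose_two_add_choose_two,
    Nat.two_mul_choose_two]
end

section
/- For every even k = 2m, the polynomial C_𝕊(n,k) = ⟨Tr x^k⟩_{𝕊_{1,n}} is a monic polynomial in n of degree m whose constant term is the Wick number (2m−1)!!. -/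
/-!
Write `CSpoly m = ∑_{i ≤ m} c_i · P_{m-i}` with `P_k = ∏_{l<k} (X + 2l)`. Each `P_k` is monic of
degree `k` and vanishes at `0` as soon as `k ≥ 1`, since its `l = 0` factor is `X`. So only the
`i = 0` term, with `c_0 = 1`, reaches degree `m`, and only the `i = m` term, with
`c_m = (2m-1)!!`, has a nonzero constant term.
-/

open Polynomial

open Finset

noncomputable def evenRisingProd (R : Type*) [CommSemiring R] (k : ℕ) : R[X] :=
  ∏ l ∈ range k, (X + C (2 * l : R))

section evenRisingProd

variable {R : Type*} [CommSemiring R]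

theorem evenRisingProd_monic (k : ℕ) : (evenRisingProd R k).Monic :=
  monic_prod_of_monic _ _ fun _ _ => monic_X_add_C _

theorem natDegree_evenRisingProd [Nontrivial R] (k : ℕ) : (evenRisingProd R k).natDegree = k := by
  rw [evenRisingProd, natDegree_prod_of_monic _ _ fun _ _ => monic_X_add_C _]
  simp only [natDegree_X_add_C, sum_const, card_range, smul_eq_mul, mul_one]

theorem coeff_evenRisingProd_self [Nontrivial R] (k : ℕ) : (evenRisingProd R k).coeff k = 1 := by
  simpa only [natDegree_evenRisingProd] using (evenRisingProd_monic (R := R) k).coeff_natDegree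

theorem coeff_evenRisingProd_zero {k : ℕ} (hk : k ≠ 0) : (evenRisingProd R k).coeff 0 = 0 := by
  obtain ⟨j, rfl⟩ := Nat.exists_eq_succ_of_ne_zero hk
  rw [evenRisingProd, prod_range_succ']
  simp

end evenRisingProd

section SumCMul

variable {R : Type*} [CommSemiring R] (c : ℕ → R) (q : ℕ → R[X]) (m : ℕ)

theorem natDegree_sum_C_mul_le (hq : ∀ k, (q k).natDegree ≤ k) :
    (∑ i ∈ range (m + 1), C (c i) * q (m - i)).natDegree ≤ m :=
  natDegree_sum_le_of_forall_le _ _ fun i _ =>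
    (natDegree_C_mul_le _ _).trans ((hq _).trans (Nat.sub_le m i))

theorem coeff_sum_C_mul_top (hq : ∀ k, (q k).natDegree ≤ k) :
    (∑ i ∈ range (m + 1), C (c i) * q (m - i)).coeff m = c 0 * (q m).coeff m := by
  rw [finsetSum_coeff, sum_range_succ', sum_eq_zero, zero_add, coeff_C_mul, Nat.sub_zero]
  intro i hi
  rw [coeff_C_mul, coeff_eq_zero_of_natDegree_lt ((hq _).trans_lt (by simp at hi; omega)),
    mul_zero]

theorem coeff_sum_C_mul_zero (hq : ∀ k ≠ 0, (q k).coeff 0 = 0) :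
    (∑ i ∈ range (m + 1), C (c i) * q (m - i)).coeff 0 = c m * (q 0).coeff 0 := by
  rw [finsetSum_coeff, sum_range_succ, sum_eq_zero, zero_add, coeff_C_mul, Nat.sub_self]
  intro i hi
  rw [coeff_C_mul, hq _ (by simp at hi; omega), mul_zero]

end SumCMul

theorem CSpoly_eq_sum (m : ℕ) :
    CSpoly m = ∑ i ∈ range (m + 1),
      C (((2 * m).choose (2 * i) : ℚ) * (Nat.doubleFactorial (2 * i - 1) : ℚ)) *
        evenRisingProd ℚ (m - i) :=
  rfl

/-- For every even `k = 2m`, `C_𝕊(n,k)` is a monic polynomial in `n` of degree `m`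
whose constant term is the Wick number `(2m−1)!!`. -/
theorem spin_factor_monic_constant_wick (m : ℕ) :
    (CSpoly m).Monic ∧ (CSpoly m).natDegree = m ∧
    (CSpoly m).coeff 0 = (Nat.doubleFactorial (2 * m - 1) : ℚ) := by
  have hdeg : ∀ k, (evenRisingProd ℚ k).natDegree ≤ k := fun k => (natDegree_evenRisingProd k).le
  have hle : (CSpoly m).natDegree ≤ m := by
    rw [CSpoly_eq_sum]; exact natDegree_sum_C_mul_le _ _ m hdeg
  have htop : (CSpoly m).coeff m = 1 := by
    rw [CSpoly_eq_sum, coeff_sum_C_mul_top _ _ m hdeg, coeff_evenRisingProd_self]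
    simp
  refine ⟨monic_of_natDegree_le_of_coeff_eq_one m hle htop,
    natDegree_eq_of_le_of_coeff_ne_zero hle (by simp [htop]), ?_⟩
  rw [CSpoly_eq_sum, coeff_sum_C_mul_zero _ _ m fun k hk => coeff_evenRisingProd_zero hk]
  simp [evenRisingProd]
end
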